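/- arXiv:1104.2802 — 7 statements merged into one kernel-verified Lean document; each statement's English description precedes it below -/
import Mathlib

section
/- Let M : ℝ → ℝ be an even, convex, C¹ function with M(0) = 0, M'(0) = 0, and M' concave on [0,∞). Then for every α ≥ 1 and t ≥ 0, M(αt) ≤ α² M(t). -/
/-!
Put `g x = α ^ 2 * M x - M (α * x)`, so `g 0 = 0` and `g' x = α * (α * M' x - M' (α * x))`.
A concave function `φ` on `[0, ∞)` with `φ 0 ≥ 0` satisfies `φ (α * x) ≤ α * φ x` for `α ≥ 1`, since
`x` is the convex combination `α⁻¹ • (α * x) + (1 - α⁻¹) • 0`. Applied to `φ = M'` this makes `g`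
nondecreasing on `[0, ∞)`, hence `g t ≥ 0`.
-/

open Set

theorem ConcaveOn.map_smul_le_mul {E : Type*} [AddCommGroup E] [Module ℝ E] {s : Set E}
    {f : E → ℝ} (hf : ConcaveOn ℝ s f) (h0 : (0 : E) ∈ s) (hf0 : 0 ≤ f 0) {α : ℝ} (hα : 1 ≤ α)
    {x : E} (hx : α • x ∈ s) : f (α • x) ≤ α * f x := by
  have hα0 : 0 < α := zero_lt_one.trans_le hα
  have hcomb : α⁻¹ • (α • x) + (1 - α⁻¹) • (0 : E) = x := by
    rw [smul_smul, inv_mul_cancel₀ hα0.ne', one_smul, smul_zero, add_zero]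
  have hjensen := hf.2 hx h0 (inv_nonneg.2 hα0.le) (sub_nonneg.2 (inv_le_one_of_one_le₀ hα))
    (add_sub_cancel _ _)
  rw [hcomb, smul_eq_mul, smul_eq_mul] at hjensen
  have hrest : 0 ≤ (1 - α⁻¹) * f 0 := mul_nonneg (sub_nonneg.2 (inv_le_one_of_one_le₀ hα)) hf0
  calc f (α • x) = α * (α⁻¹ * f (α • x)) := by field_simp
    _ ≤ α * f x := by gcongr; linarith

theorem monotoneOn_sq_mul_sub_comp_mul {M : ℝ → ℝ} (hM : Differentiable ℝ M) {α : ℝ}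
    (hα : 0 ≤ α) (hderiv : ∀ x ≥ 0, deriv M (α * x) ≤ α * deriv M x) :
    MonotoneOn (fun x ↦ α ^ 2 * M x - M (α * x)) (Ici 0) := by
  have hg (x : ℝ) : HasDerivAt (fun x ↦ α ^ 2 * M x - M (α * x))
      (α ^ 2 * deriv M x - deriv M (α * x) * α) x :=
    ((hM x).hasDerivAt.const_mul _).sub
      ((hM (α * x)).hasDerivAt.comp x ((hasDerivAt_id x).const_mul α |>.congr_deriv (mul_one α)))
  refine monotoneOn_of_deriv_nonneg (convex_Ici 0)
    (fun x _ ↦ (hg x).continuousAt.continuousWithinAt)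
    (fun x _ ↦ (hg x).differentiableAt.differentiableWithinAt) fun x hx ↦ ?_
  rw [interior_Ici, mem_Ioi] at hx
  rw [(hg x).deriv]
  nlinarith [hderiv x hx.le]

theorem stmt_2_general (M : ℝ → ℝ)
    (hC1 : ContDiff ℝ 1 M)
    (hM0 : M 0 = 0)
    (hM'0 : deriv M 0 = 0)
    (hconc : ConcaveOn ℝ (Set.Ici 0) (deriv M)) :
    ∀ α ≥ (1:ℝ), ∀ t ≥ (0:ℝ), M (α * t) ≤ α ^ 2 * M t := by
  intro α hα t ht
  have hderiv : ∀ x ≥ 0, deriv M (α * x) ≤ α * deriv M x := fun x hx ↦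
    hconc.map_smul_le_mul self_mem_Ici hM'0.ge hα
      (mul_nonneg (zero_le_one.trans hα) hx : (0 : ℝ) ≤ α • x)
  have hmono := monotoneOn_sq_mul_sub_comp_mul (hC1.differentiable one_ne_zero)
    (zero_le_one.trans hα) hderiv self_mem_Ici ht ht
  simp only [mul_zero, hM0, sub_zero] at hmono
  linarith

theorem stmt_2 (M : ℝ → ℝ)
    (heven : ∀ t : ℝ, M (-t) = M t)
    (hconv : ConvexOn ℝ Set.univ M)
    (hC1 : ContDiff ℝ 1 M)
    (hM0 : M 0 = 0)
    (hM'0 : deriv M 0 = 0)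
    (hconc : ConcaveOn ℝ (Set.Ici 0) (deriv M)) :
    ∀ α ≥ (1:ℝ), ∀ t ≥ (0:ℝ), M (α * t) ≤ α ^ 2 * M t :=
  stmt_2_general M hC1 hM0 hM'0 hconc
end

section
/- Let M : ℝ → ℝ be an even, convex, twice continuously differentiable function on (0,∞), with M(0)=0, M'(0)=0, M' concave on [0,∞), and M'' nonnegative and nonincreasing on (0,∞). Then for all t ≥ 0, M(t) ≥ (1/3) t² M''(t). -/
/-!
Since `M'` is concave on `[0, ∞)` with `M'(0) = 0`, it lies above its chords from the origin,
`λ M'(t) ≤ M'(λ t)`, and below its tangent at `t`, which gives `t M''(t) ≤ M'(t)`. Two tangent-line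
steps of the convex function `M`, from `t / 3` to `2t / 3` and on to `t`, together with the first bound give
`M(t) ≥ M(t / 3) + (t / 3) (M'(t / 3) + M'(2t / 3)) ≥ (t / 3) M'(t)`, using `M ≥ M(0) = 0` by evenness.
-/

open Set

lemma ConvexOn.apply_zero_le_of_even {E : Type*} [AddCommGroup E] [Module ℝ E] {f : E → ℝ}
    (hf : ConvexOn ℝ univ f) (heven : ∀ x, f (-x) = f x) (x : E) : f 0 ≤ f x := by
  have := hf.2 (mem_univ x) (mem_univ (-x)) (by norm_num : (0:ℝ) ≤ 1 / 2)
    (by norm_num : (0:ℝ) ≤ 1 / 2) (by norm_num)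
  rw [← smul_add, add_neg_cancel, smul_zero, heven, smul_eq_mul] at this
  linarith

lemma ConvexOn.apply_add_deriv_mul_le {S : Set ℝ} {f : ℝ → ℝ} {x y : ℝ} (hf : ConvexOn ℝ S f)
    (hx : x ∈ S) (hy : y ∈ S) (hxy : x < y) (hfd : DifferentiableAt ℝ f x) :
    f x + deriv f x * (y - x) ≤ f y := by
  have := hf.deriv_le_slope hx hy hxy hfd
  rw [slope_def_field, le_div_iff₀ (sub_pos.2 hxy)] at this
  linarith

section ConcaveVanishingAtZero

variable {g : ℝ → ℝ} {t : ℝ} (hg : ConcaveOn ℝ (Ici 0) g) (hg0 : g 0 = 0)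
include hg hg0

lemma ConcaveOn.mul_apply_le_apply_mul {c : ℝ} (hc₀ : 0 ≤ c) (hc₁ : c ≤ 1) (ht : 0 ≤ t) :
    c * g t ≤ g (c * t) := by
  have := hg.2 (self_mem_Ici (a := 0)) (mem_Ici.2 ht) (sub_nonneg.2 hc₁) hc₀ (by ring)
  simpa only [smul_eq_mul, hg0, mul_zero, zero_add] using this

lemma ConcaveOn.mul_deriv_le_apply (ht : 0 < t) (hgd : DifferentiableAt ℝ g t) :
    t * deriv g t ≤ g t := by
  have := hg.deriv_le_slope self_mem_Ici (mem_Ici.2 ht.le) ht hgd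
  rw [slope_def_field, hg0, sub_zero, sub_zero, le_div_iff₀ ht] at this
  linarith

end ConcaveVanishingAtZero

lemma ConvexOn.mul_deriv_le_three_mul {f : ℝ → ℝ} {t : ℝ} (hf : ConvexOn ℝ (Ici 0) f)
    (hfd : DifferentiableOn ℝ f (Ioi 0)) (hf' : ConcaveOn ℝ (Ici 0) (deriv f))
    (hf'0 : deriv f 0 = 0) (hft : 0 ≤ f (t / 3)) (ht : 0 < t) :
    t * deriv f t ≤ 3 * f t := by
  have hdiff : ∀ x, 0 < x → DifferentiableAt ℝ f x := fun x hx =>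
    hfd.differentiableAt (isOpen_Ioi.mem_nhds hx)
  have step₁ := hf.apply_add_deriv_mul_le (y := 2 * t / 3) (mem_Ici.2 (by positivity))
    (mem_Ici.2 (by positivity)) (by linarith) (hdiff (t / 3) (by positivity))
  have step₂ := hf.apply_add_deriv_mul_le (y := t) (mem_Ici.2 (by positivity))
    (mem_Ici.2 ht.le) (by linarith) (hdiff (2 * t / 3) (by positivity))
  have chord₁ := hf'.mul_apply_le_apply_mul hf'0 (c := 1 / 3) (by norm_num) (by norm_num) ht.le
  have chord₂ := hf'.mul_apply_le_apply_mul hf'0 (c := 2 / 3) (by norm_num) (by norm_num) ht.le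
  rw [show 1 / 3 * t = t / 3 by ring] at chord₁
  rw [show 2 / 3 * t = 2 * t / 3 by ring] at chord₂
  linarith [mul_le_mul_of_nonneg_left chord₁ ht.le, mul_le_mul_of_nonneg_left chord₂ ht.le]

theorem stmt_3_general (M : ℝ → ℝ)
    (heven : ∀ t : ℝ, M (-t) = M t)
    (hconv : ConvexOn ℝ Set.univ M)
    (hC2 : ContDiffOn ℝ 2 M (Set.Ioi 0))
    (hM0 : M 0 = 0)
    (hM'0 : deriv M 0 = 0)
    (hconc : ConcaveOn ℝ (Set.Ici 0) (deriv M)) :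
    ∀ t ≥ (0:ℝ), M t ≥ (1/3) * t ^ 2 * deriv (deriv M) t := by
  intro t ht
  rcases ht.eq_or_lt with rfl | ht
  · simp [hM0]
  have hM'd : DifferentiableAt ℝ (deriv M) t :=
    ((hC2.deriv_of_isOpen (m := 1) isOpen_Ioi (by norm_num)).differentiableOn
      (by norm_num)).differentiableAt (isOpen_Ioi.mem_nhds ht)
  have hM_nonneg : ∀ x, 0 ≤ M x := fun x => hM0 ▸ hconv.apply_zero_le_of_even heven x
  have h_first := (hconv.subset (subset_univ _) (convex_Ici 0)).mul_deriv_le_three_mul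
    (hC2.differentiableOn (by norm_num)) hconc hM'0 (hM_nonneg _) ht
  have h_second := hconc.mul_deriv_le_apply hM'0 ht hM'd
  linarith [mul_le_mul_of_nonneg_left h_second ht.le]

theorem stmt_3 (M : ℝ → ℝ)
    (heven : ∀ t : ℝ, M (-t) = M t)
    (hconv : ConvexOn ℝ Set.univ M)
    (hC2 : ContDiffOn ℝ 2 M (Set.Ioi 0))
    (hM0 : M 0 = 0)
    (hM'0 : deriv M 0 = 0)
    (hconc : ConcaveOn ℝ (Set.Ici 0) (deriv M))
    (hM''nonneg : ∀ t ∈ Set.Ioi (0:ℝ), 0 ≤ deriv (deriv M) t)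
    (hM''anti : AntitoneOn (deriv (deriv M)) (Set.Ioi 0)) :
    ∀ t ≥ (0:ℝ), M t ≥ (1/3) * t ^ 2 * deriv (deriv M) t :=
  stmt_3_general M heven hconv hC2 hM0 hM'0 hconc
end

section
/- Let M(t) = ∫₀^{|t|} φ(u)(|t|-u) du where φ(u) = 2 for 0 ≤ u ≤ 1 and φ(u) = 8/(1+u)² for u > 1. Then for all a, b ∈ ℝ, setting c = max(|a|,|b|), one has (1/4)·M''(c)·(a-b)² ≤ M(a) + M(b) - 2·M((a+b)/2). -/
noncomputable def phi (u : ℝ) : ℝ := if u ≤ 1 then 2 else 8 / (1 + u) ^ 2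

noncomputable def M (t : ℝ) : ℝ := ∫ u in (0:ℝ)..|t|, phi u * (|t| - u)

/-!
Writing `M t = ∫₀ᵗ φ(|u|) (t - u) du` for every real `t`, one gets `M'' t = φ(|t|)`. Since `φ` is
antitone on `[0, ∞)`, `M'' ≥ φ(c)` on `[-c, c]`, i.e. `M` is `φ(c)`-strongly convex there, and the
claim is the strong convexity inequality at the midpoint of `a` and `b`.
-/

open intervalIntegral Set

lemma continuous_phi_abs : Continuous fun u : ℝ => phi |u| := by
  refine Continuous.if_le continuous_const ?_ continuous_abs continuous_const ?_
  · exact continuous_const.div (by fun_prop) fun u => by positivity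
  · intro u hu
    rw [hu]
    norm_num

lemma antitoneOn_phi : AntitoneOn phi (Ici 0) := by
  intro x (hx : 0 ≤ x) y (hy0 : 0 ≤ y) hxy
  simp only [phi]
  split_ifs with hy hx1
  · rfl
  · exact absurd (hxy.trans hy) hx1
  · rw [div_le_iff₀ (by positivity)]
    nlinarith
  · gcongr

lemma hasDerivAt_integral_mul_sub {f : ℝ → ℝ} (hf : Continuous f) (t : ℝ) :
    HasDerivAt (fun t => ∫ u in (0:ℝ)..t, f u * (t - u)) (∫ u in (0:ℝ)..t, f u) t := by
  have hxf : Continuous fun u => u * f u := continuous_id.mul hf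
  have split : (fun t => ∫ u in (0:ℝ)..t, f u * (t - u)) =
      fun t => t * (∫ u in (0:ℝ)..t, f u) - ∫ u in (0:ℝ)..t, u * f u := by
    funext t
    rw [← integral_const_mul, ← integral_sub ((hf.intervalIntegrable _ _).const_mul t)
      (hxf.intervalIntegrable _ _)]
    exact integral_congr fun u _ => by ring
  rw [split]
  exact (((hasDerivAt_id' t).mul (hf.integral_hasStrictDerivAt 0 t).hasDerivAt).sub
    (hxf.integral_hasStrictDerivAt 0 t).hasDerivAt).congr_deriv (by ring)

lemma M_eq_integral (t : ℝ) : M t = ∫ u in (0:ℝ)..t, phi |u| * (t - u) := by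
  have phi_eq : ∀ s, 0 ≤ s → ∀ u ∈ uIcc 0 s, phi u * (s - u) = phi |u| * (s - u) :=
    fun s hs u hu => by rw [abs_of_nonneg (uIcc_of_le hs ▸ hu).1]
  rcases le_or_gt 0 t with ht | ht
  · rw [M, abs_of_nonneg ht]
    exact integral_congr (phi_eq t ht)
  · have reflect := integral_comp_neg (a := 0) (b := -t) fun u => phi |u| * (t - u)
    simp only [neg_neg, neg_zero, abs_neg] at reflect
    rw [M, abs_of_neg ht, integral_congr (phi_eq (-t) (by linarith)), integral_symm t 0, ← reflect,
      ← integral_neg]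
    exact integral_congr fun u _ => by ring

lemma hasDerivAt_M (t : ℝ) : HasDerivAt M (∫ u in (0:ℝ)..t, phi |u|) t := by
  rw [show M = _ from funext M_eq_integral]
  exact hasDerivAt_integral_mul_sub continuous_phi_abs t

lemma strongConvexOn_M (c : ℝ) : StrongConvexOn (Icc (-c) c) (phi c) M := by
  have hderiv : ∀ t, HasDerivAt (fun t => M t - phi c / 2 * t ^ 2)
      ((∫ u in (0:ℝ)..t, phi |u|) - phi c * t) t := fun t =>
    ((hasDerivAt_M t).sub ((hasDerivAt_pow 2 t).const_mul _)).congr_deriv (by ring)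
  have hderiv2 : ∀ t, HasDerivAt (fun t => (∫ u in (0:ℝ)..t, phi |u|) - phi c * t)
      (phi |t| - phi c) t := fun t =>
    ((continuous_phi_abs.integral_hasStrictDerivAt 0 t).hasDerivAt.sub
      ((hasDerivAt_id t).const_mul _)).congr_deriv (by ring)
  rw [strongConvexOn_iff_convex]
  simp only [Real.norm_eq_abs, sq_abs]
  refine convexOn_of_hasDerivWithinAt2_nonneg (convex_Icc _ _)
    (fun t _ => (hderiv t).continuousAt.continuousWithinAt)
    (fun t _ => (hderiv t).hasDerivWithinAt) (fun t _ => (hderiv2 t).hasDerivWithinAt) ?_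
  intro t ht
  rw [interior_Icc] at ht
  have ht_le : |t| ≤ c := abs_le.2 ⟨ht.1.le, ht.2.le⟩
  exact sub_nonneg.2 (antitoneOn_phi (abs_nonneg t) ((abs_nonneg t).trans ht_le) ht_le)

lemma StrongConvexOn.div_four_mul_sq_le_add_sub_two_mul_midpoint {s : Set ℝ} {m : ℝ}
    {f : ℝ → ℝ} (hf : StrongConvexOn s m f) {a b : ℝ} (ha : a ∈ s) (hb : b ∈ s) :
    m / 4 * (a - b) ^ 2 ≤ f a + f b - 2 * f ((a + b) / 2) := by
  have h := hf.2 ha hb (by norm_num : (0 : ℝ) ≤ 1 / 2) (by norm_num : (0 : ℝ) ≤ 1 / 2) (by norm_num)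
  rw [show (1 / 2 : ℝ) • a + (1 / 2 : ℝ) • b = (a + b) / 2 by simp only [smul_eq_mul]; ring]
    at h
  simp only [smul_eq_mul, Real.norm_eq_abs, sq_abs] at h
  linarith

theorem stmt_4 (a b : ℝ) :
    (1/4) * phi (max |a| |b|) * (a - b) ^ 2 ≤ M a + M b - 2 * M ((a + b) / 2) := by
  have ha : a ∈ Icc (-max |a| |b|) (max |a| |b|) := abs_le.1 (le_max_left _ _)
  have hb : b ∈ Icc (-max |a| |b|) (max |a| |b|) := abs_le.1 (le_max_right _ _)
  have h := (strongConvexOn_M _).div_four_mul_sq_le_add_sub_two_mul_midpoint ha hb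
  linarith
end

section
/- Let M : ℝ → ℝ be even, convex, M(0)=0, with M' concave on [0,∞) and M'(0)=0. Then M satisfies the Δ₂ condition with constant 4: M(2t) ≤ 4·M(t) for all t ≥ 0. -/
/-! The function `4 M(t) - M(2t)` vanishes at `0` and has derivative `4 M'(t) - 2 M'(2t) ≥ 0`
on `t ≥ 0`: concavity of `M'` at the midpoint of `0` and `2t`, with `M'(0) = 0`, gives
`M'(2t) ≤ 2 M'(t)`. -/

open Set

theorem ConcaveOn.apply_two_mul_le_two_mul {g : ℝ → ℝ} (hg : ConcaveOn ℝ (Ici 0) g)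
    (hg0 : 0 ≤ g 0) {t : ℝ} (ht : 0 ≤ t) : g (2 * t) ≤ 2 * g t := by
  have hmid := hg.2 (x := 0) (y := 2 * t) self_mem_Ici (mem_Ici.2 (by linarith))
    (by norm_num : (0 : ℝ) ≤ 1 / 2) (by norm_num : (0 : ℝ) ≤ 1 / 2) (by norm_num)
  simp only [smul_eq_mul, mul_zero, zero_add] at hmid
  rw [show (1 / 2 : ℝ) * (2 * t) = t by ring] at hmid
  linarith

theorem apply_two_mul_le_of_deriv_two_mul_le {f : ℝ → ℝ} {K : ℝ} (hf : Differentiable ℝ f)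
    (hf0 : f 0 = 0) (hK : ∀ t ≥ 0, deriv f (2 * t) ≤ K * deriv f t) :
    ∀ t ≥ 0, f (2 * t) ≤ 2 * K * f t := by
  set F := fun t => 2 * K * f t - f (2 * t)
  have hF : ∀ t, HasDerivAt F (2 * K * deriv f t - deriv f (2 * t) * 2) t := fun t =>
    ((hf t).hasDerivAt.const_mul _).sub <| by
      simpa [Function.comp_def] using
        (hf (2 * t)).hasDerivAt.comp t ((hasDerivAt_id t).const_mul 2)
  have hmono : MonotoneOn F (Ici 0) := by
    refine monotoneOn_of_deriv_nonneg (convex_Ici 0)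
      (HasDerivAt.continuousOn fun t _ => hF t)
      (fun t _ => (hF t).differentiableAt.differentiableWithinAt) fun t ht => ?_
    rw [interior_Ici, mem_Ioi] at ht
    rw [(hF t).deriv]
    linarith [hK t ht.le]
  intro t ht
  have := hmono self_mem_Ici ht ht
  simp only [F, hf0, mul_zero, sub_zero] at this
  linarith

theorem stmt_6_general (M : ℝ → ℝ)
    (hC1 : ContDiff ℝ 1 M)
    (hM0 : M 0 = 0)
    (hM'0 : deriv M 0 = 0)
    (hconc : ConcaveOn ℝ (Set.Ici 0) (deriv M)) :
    ∀ t ≥ (0:ℝ), M (2 * t) ≤ 4 * M t := by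
  have h := apply_two_mul_le_of_deriv_two_mul_le (hC1.differentiable one_ne_zero) hM0
    fun t ht => hconc.apply_two_mul_le_two_mul hM'0.ge ht
  norm_num at h
  exact h

theorem stmt_6 (M : ℝ → ℝ)
    (heven : ∀ t : ℝ, M (-t) = M t)
    (hconv : ConvexOn ℝ Set.univ M)
    (hC1 : ContDiff ℝ 1 M)
    (hM0 : M 0 = 0)
    (hM'0 : deriv M 0 = 0)
    (hconc : ConcaveOn ℝ (Set.Ici 0) (deriv M)) :
    ∀ t ≥ (0:ℝ), M (2 * t) ≤ 4 * M t :=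
  stmt_6_general M hC1 hM0 hM'0 hconc
end

section
/- Let μ be a probability measure, X a closed subspace of L¹(μ) whose unit sphere S_X is equi-integrable, i.e. lim_{t→∞} sup{∫_{{|f|>t}} |f| dμ : f ∈ X, ‖f‖₁ = 1} = 0. Then for every t ∈ (0,1), C_X(t) := inf{μ({|f| > t}) : f ∈ X, ‖f‖₁ = 1} > 0. -/
/-!
Fix `0 < t < 1` and a norm-one `f ∈ X`. Splitting `Ω` according to whether `|f| ≤ t`,
`t < |f| ≤ T` or `T < |f|` gives `1 = ‖f‖₁ ≤ t + T μ{|f| > t} + ∫_{|f| > T} |f|`.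
Equi-integrability makes the last term at most `(1 - t) / 2` for one large `T`, uniformly in `f`,
so `μ{|f| > t} ≥ (1 - t) / (2T)` for every such `f`.
-/

open MeasureTheory

section

variable {Ω : Type*} [MeasurableSpace Ω] {μ : Measure Ω}

theorem integral_abs_le_add_mul_measureReal_add_setIntegral [IsFiniteMeasure μ] {g : Ω → ℝ}
    (hg : Integrable g μ) (hgm : StronglyMeasurable g) {t T : ℝ} (ht : 0 ≤ t) (hT : 0 ≤ T) :
    ∫ ω, |g ω| ∂μ ≤ t * μ.real Set.univ + T * μ.real {ω | t < |g ω|} +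
      ∫ ω in {ω | T < |g ω|}, |g ω| ∂μ := by
  set A := {ω | t < |g ω|}
  set B := {ω | T < |g ω|}
  have hA : MeasurableSet A := measurableSet_lt measurable_const hgm.measurable.abs
  have hB : MeasurableSet B := measurableSet_lt measurable_const hgm.measurable.abs
  have hpointwise : ∀ ω, |g ω| ≤ t + A.indicator (fun _ ↦ T) ω + B.indicator (|g ·|) ω := by
    intro ω
    have hA_nonneg : 0 ≤ A.indicator (fun _ ↦ T) ω := Set.indicator_nonneg (fun _ _ ↦ hT) ω
    have hB_nonneg : 0 ≤ B.indicator (|g ·|) ω := Set.indicator_nonneg (fun _ _ ↦ abs_nonneg _) ω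
    by_cases hωB : ω ∈ B
    · rw [Set.indicator_of_mem hωB]
      linarith
    by_cases hωA : ω ∈ A
    · rw [Set.indicator_of_mem hωA]
      simp only [B, A, Set.mem_ofPred_eq, not_lt] at hωA hωB
      linarith
    · simp only [A, Set.mem_ofPred_eq, not_lt] at hωA
      linarith
  have hA_int : Integrable (fun ω ↦ t + A.indicator (fun _ ↦ T) ω) μ :=
    (integrable_const t).add ((integrable_const T).indicator hA)
  have hB_int : Integrable (fun ω ↦ B.indicator (|g ·|) ω) μ := hg.abs.indicator hB
  calc ∫ ω, |g ω| ∂μ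
      ≤ ∫ ω, t + A.indicator (fun _ ↦ T) ω + B.indicator (|g ·|) ω ∂μ :=
        integral_mono hg.abs (hA_int.add hB_int) hpointwise
    _ = t * μ.real Set.univ + T * μ.real A + ∫ ω in B, |g ω| ∂μ := by
        rw [integral_add hA_int hB_int,
          integral_add (integrable_const t) ((integrable_const T).indicator hA), integral_const,
          integral_indicator_const T hA, integral_indicator hB, smul_eq_mul, smul_eq_mul,
          mul_comm t, mul_comm T]

theorem L1.norm_le_add_mul_measureReal_add_setIntegral [IsProbabilityMeasure μ]
    (f : Lp ℝ 1 μ) {t T : ℝ} (ht : 0 ≤ t) (hT : 0 ≤ T) :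
    ‖f‖ ≤ t + T * μ.real {ω | t < |f ω|} + ∫ ω in {ω | T < |f ω|}, |f ω| ∂μ := by
  simpa only [L1.norm_eq_integral_norm, Real.norm_eq_abs, probReal_univ, mul_one] using
    integral_abs_le_add_mul_measureReal_add_setIntegral (L1.integrable_coeFn f)
      (Lp.stronglyMeasurable f) ht hT

end

theorem stmt_9_general {Ω : Type*} [MeasurableSpace Ω] (μ : Measure Ω) [IsProbabilityMeasure μ]
    (X : Submodule ℝ (Lp ℝ 1 μ))
    (hne : ∃ f ∈ X, ‖f‖ = 1)
    (hequi : ∀ ε > (0:ℝ), ∃ T : ℝ, ∀ t ≥ T, ∀ f ∈ X, ‖f‖ = 1 →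
      ∫ ω in {ω | t < |(f : Ω → ℝ) ω|}, |(f : Ω → ℝ) ω| ∂μ < ε) :
    ∀ t ∈ Set.Ioo (0:ℝ) 1,
      0 < sInf {r : ℝ | ∃ f ∈ X, ‖f‖ = 1 ∧
        r = (μ {ω | t < |(f : Ω → ℝ) ω|}).toReal} := by
  rintro t ⟨ht0, ht1⟩
  obtain ⟨T₀, hT₀⟩ := hequi ((1 - t) / 2) (by linarith)
  set T := max T₀ 1
  have hT : 0 < T := lt_of_lt_of_le one_pos (le_max_right _ _)
  obtain ⟨f₀, hf₀X, hf₀⟩ := hne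
  refine lt_of_lt_of_le (by positivity : 0 < (1 - t) / (2 * T))
    (le_csInf ⟨_, f₀, hf₀X, hf₀, rfl⟩ ?_)
  rintro _ ⟨f, hfX, hf1, rfl⟩
  have hsplit := L1.norm_le_add_mul_measureReal_add_setIntegral f ht0.le hT.le
  have htail := hT₀ T (le_max_left _ _) f hfX hf1
  rw [div_le_iff₀ (by positivity)]
  change 1 - t ≤ μ.real _ * (2 * T)
  nlinarith

theorem stmt_9 {Ω : Type*} [MeasurableSpace Ω] (μ : Measure Ω) [IsProbabilityMeasure μ]
    (X : Submodule ℝ (Lp ℝ 1 μ)) (hclosed : IsClosed (X : Set (Lp ℝ 1 μ)))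
    (hne : ∃ f ∈ X, ‖f‖ = 1)
    (hequi : ∀ ε > (0:ℝ), ∃ T : ℝ, ∀ t ≥ T, ∀ f ∈ X, ‖f‖ = 1 →
      ∫ ω in {ω | t < |(f : Ω → ℝ) ω|}, |(f : Ω → ℝ) ω| ∂μ < ε) :
    ∀ t ∈ Set.Ioo (0:ℝ) 1,
      0 < sInf {r : ℝ | ∃ f ∈ X, ‖f‖ = 1 ∧
        r = (μ {ω | t < |(f : Ω → ℝ) ω|}).toReal} :=
  stmt_9_general μ X hne hequi
end

section
/- Let μ be a probability measure on Ω and g ∈ L¹(μ) with distribution function F_g(t) = μ({|g| > t}). Then for every τ > 0: τ² ∫_{{|g| ≤ 1/τ}} g² dμ + τ ∫_{{|g| > 1/τ}} |g| dμ ≤ 2τ² ∫₀^{1/τ} ∫_t^{+∞} F_g(x) dx dt. -/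
/-!
By Tonelli, `∫_t^∞ F_g = 𝔼 (|g| - t)⁺`, and then by Fubini
`∫₀^{1/τ} ∫_t^∞ F_g = 𝔼 H(|g|)` with `H(a) = ∫₀^{1/τ} (a - t)⁺ dt`, which equals `a² / 2` for
`a ≤ 1/τ` and `a/τ - 1/(2τ²)` beyond. The claim is then the pointwise comparison
`τ² a² = 2τ² H(a)` on `{a ≤ 1/τ}` and `τ a ≤ 2τ a - 1 = 2τ² H(a)` on `{a > 1/τ}`.
-/

open MeasureTheory Set

section Tail

variable {Ω : Type*} [MeasurableSpace Ω] {μ : Measure Ω} {f : Ω → ℝ}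

lemma lintegral_Ioi_meas_lt [SFinite μ] (hf : Measurable f) (t : ℝ) :
    ∫⁻ x in Ioi t, μ {ω | x < f ω} = ∫⁻ ω, ENNReal.ofReal (f ω - t) ∂μ := by
  have hS : MeasurableSet {p : ℝ × Ω | p.1 < f p.2} :=
    measurableSet_lt measurable_fst (hf.comp measurable_snd)
  calc ∫⁻ x in Ioi t, μ {ω | x < f ω}
      = (volume.restrict (Ioi t)).prod μ {p : ℝ × Ω | p.1 < f p.2} := (Measure.prod_apply hS).symm
    _ = ∫⁻ ω, volume.restrict (Ioi t) (Iio (f ω)) ∂μ := Measure.prod_apply_symm hS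
    _ = ∫⁻ ω, ENNReal.ofReal (f ω - t) ∂μ := by
        simp_rw [Measure.restrict_apply measurableSet_Iio, Iio_inter_Ioi, Real.volume_Ioo]

lemma integral_Ioi_meas_lt [IsFiniteMeasure μ] (hf : Measurable f) (t : ℝ) :
    ∫ x in Ioi t, (μ {ω | x < f ω}).toReal = ∫ ω, max (f ω - t) 0 ∂μ := by
  have hanti : Antitone fun x => μ {ω | x < f ω} := fun x y hxy =>
    measure_mono fun ω (hω : y < f ω) => hxy.trans_lt hω
  rw [integral_toReal hanti.measurable.aemeasurable (ae_of_all _ fun _ => measure_lt_top μ _),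
    integral_eq_lintegral_of_nonneg_ae (f := fun ω => max (f ω - t) 0)
      (ae_of_all _ fun _ => le_max_right _ _) (by fun_prop), lintegral_Ioi_meas_lt hf]
  simp [ENNReal.ofReal_max]

lemma integrable_prod_max_sub [IsFiniteMeasure μ] (hf : Measurable f) (hfi : Integrable f μ)
    (b : ℝ) :
    Integrable (fun p : ℝ × Ω => max (f p.2 - p.1) 0) ((volume.restrict (Ioc 0 b)).prod μ) := by
  have hbound : Integrable (fun p : ℝ × Ω => |f p.2| + |p.1|)
      ((volume.restrict (Ioc 0 b)).prod μ) :=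
    (hfi.abs.comp_snd _).add (continuous_abs.integrableOn_Ioc.comp_fst μ)
  refine hbound.mono' (by fun_prop) (ae_of_all _ fun p => ?_)
  rw [Real.norm_of_nonneg (le_max_right _ _)]
  exact max_le (by linarith [le_abs_self (f p.2), neg_abs_le p.1])
    (add_nonneg (abs_nonneg _) (abs_nonneg _))

lemma integral_Ioc_integral_Ioi_meas_lt [IsFiniteMeasure μ] (hf : Measurable f)
    (hfi : Integrable f μ) (b : ℝ) :
    ∫ t in Ioc 0 b, ∫ x in Ioi t, (μ {ω | x < f ω}).toReal
      = ∫ ω, (∫ t in Ioc 0 b, max (f ω - t) 0) ∂μ := by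
  simp_rw [integral_Ioi_meas_lt hf]
  exact integral_integral_swap (f := fun t ω => max (f ω - t) 0) (integrable_prod_max_sub hf hfi b)

end Tail

lemma integral_Ioc_max_sub {a b : ℝ} (ha : 0 ≤ a) (hb : 0 ≤ b) :
    ∫ t in Ioc 0 b, max (a - t) 0 = a * min a b - min a b ^ 2 / 2 := by
  have hm : 0 ≤ min a b := le_min ha hb
  rw [setIntegral_eq_of_subset_of_forall_sdiff_eq_zero measurableSet_Ioc
      (Ioc_subset_Ioc_right (min_le_right a b))
      fun t ⟨⟨ht0, htb⟩, hnot⟩ => max_eq_right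
        (sub_nonpos.mpr (not_lt.mp fun hta => hnot ⟨ht0, le_min hta.le htb⟩))]
  rw [setIntegral_congr_fun measurableSet_Ioc (g := fun t => a - t)
      fun t ht => max_eq_left (by linarith [ht.2, min_le_left a b]),
    ← intervalIntegral.integral_of_le hm,
    intervalIntegral.integral_sub intervalIntegrable_const intervalIntegral.intervalIntegrable_id,
    intervalIntegral.integral_const, integral_id, smul_eq_mul]
  ring

lemma sq_eq_two_mul_integral_Ioc_max_sub {a b : ℝ} (ha : 0 ≤ a) (hab : a ≤ b) :
    a ^ 2 = 2 * ∫ t in Ioc 0 b, max (a - t) 0 := by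
  rw [integral_Ioc_max_sub ha (ha.trans hab), min_eq_left hab]
  ring

lemma mul_le_two_mul_sq_mul_integral_Ioc_max_sub {a τ : ℝ} (hτ : 0 < τ) (ha : 1 / τ < a) :
    τ * a ≤ 2 * τ ^ 2 * ∫ t in Ioc 0 (1 / τ), max (a - t) 0 := by
  have hb : 0 < 1 / τ := by positivity
  rw [integral_Ioc_max_sub (hb.trans ha).le hb.le, min_eq_right ha.le]
  have h1 : 1 < τ * a := by rwa [div_lt_iff₀ hτ, mul_comm] at ha
  have h2 : 2 * τ ^ 2 * (a * (1 / τ) - (1 / τ) ^ 2 / 2) = 2 * (τ * a) - 1 := by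
    field_simp
  linarith

theorem stmt_11 {Ω : Type*} [MeasurableSpace Ω] (μ : Measure Ω) [IsProbabilityMeasure μ]
    (g : Ω → ℝ) (hmeas : Measurable g) (hint : Integrable g μ) :
    ∀ τ > (0:ℝ),
      τ ^ 2 * ∫ ω in {ω | |g ω| ≤ 1/τ}, (g ω) ^ 2 ∂μ
        + τ * ∫ ω in {ω | 1/τ < |g ω|}, |g ω| ∂μ
      ≤ 2 * τ ^ 2 * ∫ t in Set.Ioc (0:ℝ) (1/τ),
          ∫ x in Set.Ioi t, (μ {ω | x < |g ω|}).toReal := by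
  intro τ hτ
  rw [integral_Ioc_integral_Ioi_meas_lt hmeas.abs hint.abs]
  set H : Ω → ℝ := fun ω => ∫ t in Ioc 0 (1 / τ), max (|g ω| - t) 0
  have hH : Integrable H μ := (integrable_prod_max_sub hmeas.abs hint.abs _).integral_prod_right
  set A : Set Ω := {ω | |g ω| ≤ 1 / τ}
  have hA : MeasurableSet A := measurableSet_le hmeas.abs measurable_const
  have hAc : {ω | 1 / τ < |g ω|} = Aᶜ := by ext; simp [A]
  have on_A : ∫ ω in A, g ω ^ 2 ∂μ = ∫ ω in A, 2 * H ω ∂μ :=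
    setIntegral_congr_fun hA fun ω hω => by
      rw [← sq_abs]; exact sq_eq_two_mul_integral_Ioc_max_sub (abs_nonneg _) hω
  have on_Ac : ∫ ω in Aᶜ, τ * |g ω| ∂μ ≤ ∫ ω in Aᶜ, 2 * τ ^ 2 * H ω ∂μ :=
    setIntegral_mono_on (hint.abs.const_mul τ).integrableOn (hH.const_mul _).integrableOn
      hA.compl fun ω hω => mul_le_two_mul_sq_mul_integral_Ioc_max_sub hτ (not_le.mp hω)
  calc τ ^ 2 * ∫ ω in A, g ω ^ 2 ∂μ + τ * ∫ ω in {ω | 1 / τ < |g ω|}, |g ω| ∂μ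
      = 2 * τ ^ 2 * ∫ ω in A, H ω ∂μ + ∫ ω in Aᶜ, τ * |g ω| ∂μ := by
        rw [on_A, hAc, integral_const_mul, integral_const_mul]; ring
    _ ≤ 2 * τ ^ 2 * ∫ ω in A, H ω ∂μ + ∫ ω in Aᶜ, 2 * τ ^ 2 * H ω ∂μ := by gcongr
    _ = 2 * τ ^ 2 * ∫ ω, H ω ∂μ := by
        rw [integral_const_mul, ← mul_add, integral_add_compl hA hH]
end

section
/- Let f(x) = 1/(x·log²(x/e)) on (0,1], which is strictly decreasing on (0,1/e]. Let f⁻¹ : [1,∞) → (0,1/e) denote the inverse of the restriction of f to that decreasing branch, so that for t > 1 the Lebesgue measure of {x ∈ (0,1) : f(x) > t} equals f⁻¹(t). Let x₀ ∈ (0,1/e) satisfy f(x₀)=1 and set t₀ = f(x₀²/e). Then for all t > t₀, f⁻¹(t) > e/(16·t²). -/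
noncomputable def f (x : ℝ) : ℝ := 1 / (x * (Real.log (x / Real.exp 1)) ^ 2)

/-! Since `f` decreases on `(0, 1/e]` and `t > t₀ = f (x₀² / e)`, the point `x = f⁻¹ t` lies
below `x₀² / e`, hence `√(x e) < x₀` and `f (√(x e)) > f x₀ = 1`. The identity `f (√(x e)) = 4 √(x / e) f x` turns this into
`4 √(x / e) t > 1`, which is the claim after squaring. -/

open Real Set

lemma log_lt_neg_one_of_lt_exp_one_inv {x : ℝ} (hx : 0 < x) (hxe : x < (exp 1)⁻¹) :
    log x < -1 := by
  simpa only [log_inv, log_exp] using log_lt_log hx hxe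

lemma f_eq_inv {x : ℝ} (hx : 0 < x) : f x = (x * (log x - 1) ^ 2)⁻¹ := by
  rw [f, one_div, log_div hx.ne' (exp_ne_zero 1), log_exp]

lemma hasDerivAt_mul_log_sub_one_sq {x : ℝ} (hx : 0 < x) :
    HasDerivAt (fun x => x * (log x - 1) ^ 2) ((log x - 1) ^ 2 + 2 * (log x - 1)) x := by
  refine ((hasDerivAt_id' x).fun_mul
    (((hasDerivAt_log hx.ne').sub_const 1).fun_pow 2)).congr_deriv ?_
  field_simp
  ring

lemma strictMonoOn_mul_log_sub_one_sq :
    StrictMonoOn (fun x => x * (log x - 1) ^ 2) (Ioc 0 (exp 1)⁻¹) := by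
  apply strictMonoOn_of_deriv_pos (convex_Ioc _ _)
  · exact continuousOn_id.mul
      ((continuousOn_log.mono fun x hx => hx.1.ne').sub continuousOn_const |>.pow 2)
  · rw [interior_Ioc]
    rintro x ⟨hx, hxe⟩
    have hlog := log_lt_neg_one_of_lt_exp_one_inv hx hxe
    rw [(hasDerivAt_mul_log_sub_one_sq hx).deriv]
    nlinarith

lemma strictAntiOn_f : StrictAntiOn f (Ioc 0 (exp 1)⁻¹) := by
  intro a ha b hb hab
  rw [f_eq_inv ha.1, f_eq_inv hb.1]
  have hlog : log a < 1 := by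
    have := log_le_log ha.1 ha.2
    rw [log_inv, log_exp] at this
    linarith
  have hpos : 0 < a * (log a - 1) ^ 2 := mul_pos ha.1 (by nlinarith)
  exact inv_strictAnti₀ hpos (strictMonoOn_mul_log_sub_one_sq ha hb hab)

lemma f_sqrt_mul_exp_one {x : ℝ} (hx : 0 < x) :
    f √(x * exp 1) = 4 * √(x / exp 1) * f x := by
  have he : 0 < exp 1 := exp_pos 1
  obtain ⟨s, hs, rfl⟩ : ∃ s > 0, x = s ^ 2 * exp 1 :=
    ⟨√(x / exp 1), sqrt_pos.mpr (by positivity), by rw [sq_sqrt (by positivity)]; field_simp⟩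
  have h1 : √(s ^ 2 * exp 1 * exp 1) = s * exp 1 := by
    rw [← sqrt_sq (by positivity : 0 ≤ s * exp 1)]; ring_nf
  have h2 : √(s ^ 2 * exp 1 / exp 1) = s := by
    rw [mul_div_cancel_right₀ _ he.ne', sqrt_sq hs.le]
  rw [h1, h2, f, f, mul_div_cancel_right₀ _ he.ne', mul_div_cancel_right₀ _ he.ne', log_pow]
  field_simp
  ring

lemma sq_div_exp_one_lt_self {x : ℝ} (hx : 0 < x) (hxe : x < exp 1) : x ^ 2 / exp 1 < x := by
  rw [div_lt_iff₀ (exp_pos 1), sq]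
  exact mul_lt_mul_of_pos_left hxe hx

lemma exp_one_div_sixteen_mul_sq_lt {x t : ℝ} (hx : 0 < x) (ht : 0 < t)
    (h : 1 < 4 * √(x / exp 1) * t) : exp 1 / (16 * t ^ 2) < x := by
  have hsq := one_lt_pow₀ h two_ne_zero
  rw [mul_pow, mul_pow, sq_sqrt (by positivity)] at hsq
  rw [div_lt_iff₀ (by positivity)]
  field_simp at hsq
  linarith

theorem stmt_19 (finv : ℝ → ℝ)
    (hfinv : ∀ t ≥ (1:ℝ), finv t ∈ Set.Ioo (0:ℝ) (Real.exp 1)⁻¹ ∧ f (finv t) = t)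
    (x₀ : ℝ) (hx₀ : x₀ ∈ Set.Ioo (0:ℝ) (Real.exp 1)⁻¹) (hfx₀ : f x₀ = 1)
    (t₀ : ℝ) (ht₀ : t₀ = f (x₀ ^ 2 / Real.exp 1)) :
    ∀ t > t₀, finv t > Real.exp 1 / (16 * t ^ 2) := by
  intro t ht
  have hx₀' : x₀ ∈ Ioc 0 (exp 1)⁻¹ := Ioo_subset_Ioc_self hx₀
  have he : 1 < exp 1 := one_lt_exp_iff.mpr one_pos
  have hy_lt : x₀ ^ 2 / exp 1 < x₀ :=
    sq_div_exp_one_lt_self hx₀.1 (hx₀.2.trans ((inv_lt_one_of_one_lt₀ he).trans he))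
  have hy : x₀ ^ 2 / exp 1 ∈ Ioc 0 (exp 1)⁻¹ :=
    ⟨div_pos (pow_pos hx₀.1 2) (exp_pos 1), hy_lt.le.trans hx₀'.2⟩
  have ht₀_gt : 1 < t₀ := ht₀ ▸ hfx₀ ▸ strictAntiOn_f hy hx₀' hy_lt
  obtain ⟨hx, hfx⟩ := hfinv t (by linarith)
  generalize finv t = x at hx hfx ⊢
  subst hfx
  have hx_lt : x < x₀ ^ 2 / exp 1 :=
    (strictAntiOn_f.lt_iff_gt hy (Ioo_subset_Ioc_self hx)).mp (by rwa [← ht₀])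
  have hsqrt_lt : √(x * exp 1) < x₀ := by
    rwa [sqrt_lt' hx₀.1, ← lt_div_iff₀ (by positivity)]
  have hsqrt : √(x * exp 1) ∈ Ioc 0 (exp 1)⁻¹ :=
    ⟨sqrt_pos.mpr (mul_pos hx.1 (exp_pos 1)), hsqrt_lt.le.trans hx₀'.2⟩
  have hone_lt : 1 < 4 * √(x / exp 1) * f x :=
    calc 1 = f x₀ := hfx₀.symm
      _ < f √(x * exp 1) := strictAntiOn_f hsqrt hx₀' hsqrt_lt
      _ = 4 * √(x / exp 1) * f x := f_sqrt_mul_exp_one hx.1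
  exact exp_one_div_sixteen_mul_sq_lt hx.1 (by linarith) hone_lt
end
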